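/- Let G=(V,E) be a cobipartite graph with a partition of V into two nonempty cliques C_1 and C_2. For v ∈ V define g_v : V → {0,1,2} by g_v(v)=2, g_v(x)=0 for x ∈ N(v), and g_v(x)=1 for x ∈ V \ N[v]; then g_v is a perfect Roman dominating function. If f is a perfect Roman dominating function with |V_2(f) ∩ C_1| ≥ 2, then C_1 ⊆ V_1(f) ∪ V_2(f), and for every v ∈ C_2 one has ω(g_v) ≤ |C_1| + 2 ≤ ω(f) (and symmetrically with C_1 and C_2 exchanged). Consequently, there exists a minimum-weight perfect Roman dominating function f on G with |V_2(f) ∩ C_1| ≤ 1 and |V_2(f) ∩ C_2| ≤ 1. -/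
import Mathlib

def IsPRDF {V : Type*} (G : SimpleGraph V) (f : V → Fin 3) : Prop :=
  ∀ v, f v = 0 → ∃! u, G.Adj v u ∧ f u = 2

def weight {V : Type*} [Fintype V] (f : V → Fin 3) : ℕ := ∑ v, (f v : ℕ)

def gfun {V : Type*} [DecidableEq V] (G : SimpleGraph V) [DecidableRel G.Adj] (v : V) :
    V → Fin 3 :=
  fun x => if x = v then 2 else if G.Adj v x then 0 else 1

lemma fin3_cases (x : Fin 3) : x = 0 ∨ x = 1 ∨ x = 2 := by fin_cases x <;> simp

lemma gfun_eq_two_iff {V : Type*} [DecidableEq V] (G : SimpleGraph V) [DecidableRel G.Adj]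
    (v x : V) : gfun G v x = 2 ↔ x = v := by
  unfold gfun
  split_ifs with h1 h2 <;> simp [h1] <;> decide

lemma gfun_isPRDF {V : Type*} [DecidableEq V] (G : SimpleGraph V) [DecidableRel G.Adj]
    (v : V) : IsPRDF G (gfun G v) := by
  intro x hx
  have hxv : x ≠ v := by
    intro h; rw [h] at hx; simp [gfun] at hx
  have hadj : G.Adj v x := by
    by_contra h
    simp [gfun, hxv, h] at hx
  refine ⟨v, ⟨hadj.symm, by simp [gfun]⟩, ?_⟩
  rintro u ⟨hu, hu2⟩
  exact (gfun_eq_two_iff G v u).mp hu2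

lemma main_lemma {V : Type*} [Fintype V] [DecidableEq V] (G : SimpleGraph V)
    [DecidableRel G.Adj] (C1 C2 : Finset V)
    (hdisj : Disjoint C1 C2) (hunion : C1 ∪ C2 = Finset.univ)
    (hc1 : G.IsClique (C1 : Set V)) (hc2 : G.IsClique (C2 : Set V)) :
    ∀ f : V → Fin 3, IsPRDF G f → 2 ≤ (C1.filter (fun v => f v = 2)).card →
      (∀ c ∈ C1, f c = 1 ∨ f c = 2) ∧
      (∀ v ∈ C2, weight (gfun G v) ≤ C1.card + 2 ∧ C1.card + 2 ≤ weight f) := by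
  intro f hf hcard
  have hne0 : ∀ c ∈ C1, f c ≠ 0 := by
    intro c hc hc0
    obtain ⟨u, _, huniq⟩ := hf c hc0
    obtain ⟨a, ha, b, hb, hab⟩ := Finset.one_lt_card.mp hcard
    simp only [Finset.mem_filter] at ha hb
    have hac : a ≠ c := fun h => by rw [h, hc0] at ha; exact absurd ha.2 (by decide)
    have hbc : b ≠ c := fun h => by rw [h, hc0] at hb; exact absurd hb.2 (by decide)
    have h1 : a = u := huniq a ⟨(hc1 (Finset.mem_coe.mpr hc) (Finset.mem_coe.mpr ha.1) (Ne.symm hac)), ha.2⟩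
    have h2 : b = u := huniq b ⟨(hc1 (Finset.mem_coe.mpr hc) (Finset.mem_coe.mpr hb.1) (Ne.symm hbc)), hb.2⟩
    exact hab (h1.trans h2.symm)
  have hval : ∀ c ∈ C1, f c = 1 ∨ f c = 2 := by
    intro c hc
    rcases fin3_cases (f c) with h | h | h
    · exact absurd h (hne0 c hc)
    · exact Or.inl h
    · exact Or.inr h
  refine ⟨hval, ?_⟩
  intro v hv
  constructor
  · -- weight (gfun G v) ≤ C1.card + 2
    have hsplit : weight (gfun G v) = ∑ x ∈ C1, ((gfun G v x : ℕ)) + ∑ x ∈ C2, ((gfun G v x : ℕ)) := by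
      rw [weight, ← Finset.sum_union hdisj, hunion]
    have hC1 : ∑ x ∈ C1, ((gfun G v x : ℕ)) ≤ C1.card := by
      have hb : ∀ x ∈ C1, ((gfun G v x : ℕ)) ≤ 1 := by
        intro x hx
        have hxv : x ≠ v := fun h => (Finset.disjoint_left.mp hdisj hx) (h ▸ hv)
        unfold gfun
        split_ifs <;> simp_all
      calc ∑ x ∈ C1, ((gfun G v x : ℕ)) ≤ ∑ _x ∈ C1, 1 := Finset.sum_le_sum hb
        _ = C1.card := by simp
    have hC2 : ∑ x ∈ C2, ((gfun G v x : ℕ)) = 2 := by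
      rw [← Finset.add_sum_erase _ _ hv]
      have h1 : ((gfun G v v : ℕ)) = 2 := by simp [gfun]
      have h2 : ∑ x ∈ C2.erase v, ((gfun G v x : ℕ)) = 0 := by
        apply Finset.sum_eq_zero
        intro x hx
        have hxv : x ≠ v := (Finset.mem_erase.mp hx).1
        have hadj : G.Adj v x := hc2 (Finset.mem_coe.mpr hv)
          (Finset.mem_coe.mpr (Finset.mem_erase.mp hx).2) (Ne.symm hxv)
        simp [gfun, hxv, hadj]
      rw [h1, h2]
    omega
  · -- C1.card + 2 ≤ weight f
    have h1 : ∑ c ∈ C1, ((f c : ℕ)) ≤ weight f := by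
      rw [weight]
      exact Finset.sum_le_sum_of_subset (Finset.subset_univ _)
    have hsplit : ∑ c ∈ C1.filter (fun v => f v = 2), ((f c : ℕ))
        + ∑ c ∈ C1.filter (fun v => ¬ f v = 2), ((f c : ℕ)) = ∑ c ∈ C1, ((f c : ℕ)) :=
      Finset.sum_filter_add_sum_filter_not C1 _ _
    have hS : ∑ c ∈ C1.filter (fun v => f v = 2), ((f c : ℕ))
        = 2 * (C1.filter (fun v => f v = 2)).card := by
      rw [Finset.sum_congr rfl (fun c hc => ?_), Finset.sum_const, smul_eq_mul, mul_comm]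
      have := (Finset.mem_filter.mp hc).2
      rw [this]; decide
    have hT : (C1.filter (fun v => ¬ f v = 2)).card
        ≤ ∑ c ∈ C1.filter (fun v => ¬ f v = 2), ((f c : ℕ)) := by
      calc (C1.filter (fun v => ¬ f v = 2)).card
          = ∑ _c ∈ C1.filter (fun v => ¬ f v = 2), 1 := by simp
        _ ≤ _ := by
            apply Finset.sum_le_sum
            intro c hc
            obtain ⟨hcC, hc2⟩ := Finset.mem_filter.mp hc
            rcases hval c hcC with h | h
            · rw [h]; decide
            · exact absurd h hc2
    have hcards : (C1.filter (fun v => f v = 2)).card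
        + (C1.filter (fun v => ¬ f v = 2)).card = C1.card :=
      Finset.card_filter_add_card_filter_not _
    omega

theorem stmt17 {V : Type*} [Fintype V] [DecidableEq V] (G : SimpleGraph V)
    [DecidableRel G.Adj] (C1 C2 : Finset V)
    (hdisj : Disjoint C1 C2) (hunion : C1 ∪ C2 = Finset.univ)
    (hne1 : C1.Nonempty) (hne2 : C2.Nonempty)
    (hc1 : G.IsClique (C1 : Set V)) (hc2 : G.IsClique (C2 : Set V)) :
    (∀ v : V, IsPRDF G (gfun G v)) ∧
    (∀ f : V → Fin 3, IsPRDF G f → 2 ≤ (C1.filter (fun v => f v = 2)).card →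
      (∀ c ∈ C1, f c = 1 ∨ f c = 2) ∧
      (∀ v ∈ C2, weight (gfun G v) ≤ C1.card + 2 ∧ C1.card + 2 ≤ weight f)) ∧
    (∀ f : V → Fin 3, IsPRDF G f → 2 ≤ (C2.filter (fun v => f v = 2)).card →
      (∀ c ∈ C2, f c = 1 ∨ f c = 2) ∧
      (∀ v ∈ C1, weight (gfun G v) ≤ C2.card + 2 ∧ C2.card + 2 ≤ weight f)) ∧
    (∃ f : V → Fin 3, IsPRDF G f ∧ (∀ h : V → Fin 3, IsPRDF G h → weight f ≤ weight h) ∧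
      (C1.filter (fun v => f v = 2)).card ≤ 1 ∧
      (C2.filter (fun v => f v = 2)).card ≤ 1) := by
  classical
  have hmain1 := main_lemma G C1 C2 hdisj hunion hc1 hc2
  have hmain2 := main_lemma G C2 C1 hdisj.symm (by rw [Finset.union_comm]; exact hunion) hc2 hc1
  refine ⟨fun v => gfun_isPRDF G v, hmain1, hmain2, ?_⟩
  -- existence of a minimum-weight pRDF
  obtain ⟨v1, hv1⟩ := hne1
  have hsne : ((Finset.univ : Finset (V → Fin 3)).filter (fun f => IsPRDF G f)).Nonempty :=
    ⟨gfun G v1, Finset.mem_filter.mpr ⟨Finset.mem_univ _, gfun_isPRDF G v1⟩⟩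
  obtain ⟨f, hfmem, hfmin⟩ := Finset.exists_min_image _ weight hsne
  have hfp : IsPRDF G f := (Finset.mem_filter.mp hfmem).2
  have hfmin' : ∀ h : V → Fin 3, IsPRDF G h → weight f ≤ weight h := fun h hh =>
    hfmin h (Finset.mem_filter.mpr ⟨Finset.mem_univ _, hh⟩)
  have hgcard : ∀ (v : V) (C : Finset V), (C.filter (fun x => gfun G v x = 2)).card ≤ 1 := by
    intro v C
    have : C.filter (fun x => gfun G v x = 2) ⊆ {v} := by
      intro x hx
      simp only [Finset.mem_filter] at hx
      simp [(gfun_eq_two_iff G v x).mp hx.2]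
    calc _ ≤ ({v} : Finset V).card := Finset.card_le_card this
      _ = 1 := Finset.card_singleton v
  by_cases h1 : 2 ≤ (C1.filter (fun v => f v = 2)).card
  · obtain ⟨v2, hv2⟩ := hne2
    obtain ⟨hle, hge⟩ := (hmain1 f hfp h1).2 v2 hv2
    refine ⟨gfun G v2, gfun_isPRDF G v2, fun h hh => le_trans (le_trans hle hge) (hfmin' h hh),
      hgcard v2 C1, hgcard v2 C2⟩
  · by_cases h2 : 2 ≤ (C2.filter (fun v => f v = 2)).card
    · obtain ⟨hle, hge⟩ := (hmain2 f hfp h2).2 v1 hv1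
      refine ⟨gfun G v1, gfun_isPRDF G v1, fun h hh => le_trans (le_trans hle hge) (hfmin' h hh),
        hgcard v1 C1, hgcard v1 C2⟩
    · exact ⟨f, hfp, hfmin', by omega, by omega⟩
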